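/- For any two quantum states ω and τ (density operators on a finite-dimensional Hilbert space), D_max(ω‖τ) ≥ D_min(ω‖τ), i.e., inf{λ : ω ≤ 2^λ τ} ≥ −log₂ F(ω,τ). -/

import Mathlib

open Matrix Kronecker BigOperators ComplexOrder

/-- The positive semidefinite square root of a positive semidefinite matrix
(the definition `Matrix.PosSemidef.sqrt` of the older Mathlib, since removed). -/
noncomputable def Matrix.PosSemidef.sqrt {n : Type*} [Fintype n] [DecidableEq n]
    {𝕜 : Type*} [RCLike 𝕜] {A : Matrix n n 𝕜} (hA : A.PosSemidef) : Matrix n n 𝕜 :=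
  hA.1.eigenvectorUnitary.1 * diagonal ((↑) ∘ (√·) ∘ hA.1.eigenvalues) *
    (star hA.1.eigenvectorUnitary : Matrix n n 𝕜)

noncomputable def traceNorm {n : Type*} [Fintype n] [DecidableEq n] (A : Matrix n n ℂ) : ℝ :=
  ((Matrix.posSemidef_conjTranspose_mul_self A).sqrt).trace.re

noncomputable def vNEntropy {n : Type*} [Fintype n] [DecidableEq n] (M : Matrix n n ℂ) : ℝ :=
  if h : M.IsHermitian then -∑ i, (h.eigenvalues i) * Real.logb 2 (h.eigenvalues i) else 0

open scoped Classical in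
noncomputable def fidelity {n : Type*} [Fintype n] [DecidableEq n] (A B : Matrix n n ℂ) : ℝ :=
  if h : A.PosSemidef ∧ B.PosSemidef then (traceNorm (h.1.sqrt * h.2.sqrt))^2 else 0

noncomputable def Dmin {n : Type*} [Fintype n] [DecidableEq n] (A B : Matrix n n ℂ) : ℝ :=
  - Real.logb 2 (fidelity A B)

noncomputable def Dmax {n : Type*} [Fintype n] [DecidableEq n] (A B : Matrix n n ℂ) : EReal :=
  ⨅ l ∈ {l : ℝ | ((((2:ℝ)^l : ℝ) : ℂ) • B - A).PosSemidef}, (l : EReal)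

noncomputable def traceSnd {x y : Type*} [Fintype y] (M : Matrix (x × y) (x × y) ℂ) :
    Matrix x x ℂ := Matrix.of fun i j => ∑ k, M (i,k) (j,k)

noncomputable def traceFst {x y : Type*} [Fintype x] (M : Matrix (x × y) (x × y) ℂ) :
    Matrix y y ℂ := Matrix.of fun i j => ∑ k, M (k,i) (k,j)

noncomputable def mutInfo {x y : Type*} [Fintype x] [Fintype y] [DecidableEq x] [DecidableEq y]
    (M : Matrix (x × y) (x × y) ℂ) : ℝ :=
  vNEntropy (traceSnd M) + vNEntropy (traceFst M) - vNEntropy M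

def blockApply {r a b : Type*} (Φ : Matrix a a ℂ →ₗ[ℂ] Matrix b b ℂ)
    (M : Matrix (r × a) (r × a) ℂ) : Matrix (r × b) (r × b) ℂ :=
  Matrix.of fun x y => Φ (Matrix.of fun s t => M (x.1, s) (y.1, t)) x.2 y.2

structure QChannel (a b : Type*) [Fintype a] [DecidableEq a] [Fintype b] [DecidableEq b] where
  map : Matrix a a ℂ →ₗ[ℂ] Matrix b b ℂ
  trace_preserving : ∀ M : Matrix a a ℂ, (map M).trace = M.trace
  completely_pos : ∀ (n : ℕ) (M : Matrix (Fin n × a) (Fin n × a) ℂ),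
    M.PosSemidef → (blockApply map M).PosSemidef

noncomputable def IRB {r b e : Type*} [Fintype r] [Fintype b] [Fintype e]
    [DecidableEq r] [DecidableEq b] [DecidableEq e]
    (ω : Matrix (r × (b × e)) (r × (b × e)) ℂ) : ℝ :=
  mutInfo (Matrix.of fun (p q : r × b) => ∑ y : e, ω (p.1, (p.2, y)) (q.1, (q.2, y)))

noncomputable def IRE {r b e : Type*} [Fintype r] [Fintype b] [Fintype e]
    [DecidableEq r] [DecidableEq b] [DecidableEq e]
    (ω : Matrix (r × (b × e)) (r × (b × e)) ℂ) : ℝ :=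
  mutInfo (Matrix.of fun (p q : r × e) => ∑ x : b, ω (p.1, (x, p.2)) (q.1, (x, q.2)))

/-! If `ω ≤ 2^λ τ`, operator monotonicity of the square root gives `√ω ≤ 2^(λ/2) √τ`, hence
`0 ≤ tr (√ω (2^(λ/2) √τ - √ω))`, i.e. `1 = tr ω ≤ 2^(λ/2) Re tr (√ω √τ) ≤ 2^(λ/2) ‖√ω √τ‖₁`.
Squaring gives `F(ω, τ) ≥ 2^(-λ)`, that is `D_min(ω‖τ) ≤ λ`. -/

open scoped InnerProductSpace MatrixOrder Matrix.Norms.L2Operator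

section

variable {n : Type*} [Fintype n] [DecidableEq n]

lemma Matrix.trace_eq_sum_inner {𝕜 : Type*} [RCLike 𝕜] (M : Matrix n n 𝕜) {ι : Type*}
    [Fintype ι] (b : OrthonormalBasis ι 𝕜 (EuclideanSpace 𝕜 n)) :
    M.trace = ∑ i, ⟪b i, M.toEuclideanLin (b i)⟫_𝕜 := by
  rw [← LinearMap.trace_eq_sum_inner, toEuclideanLin_eq_toLin_orthonormal,
    LinearMap.trace_eq_matrix_trace 𝕜 (EuclideanSpace.basisFun n 𝕜).toBasis,
    LinearMap.toMatrix_toLin]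

lemma Matrix.norm_toEuclideanLin_eigenvectorBasis {𝕜 : Type*} [RCLike 𝕜] (M : Matrix n n 𝕜)
    (hH : (Mᴴ * M).IsHermitian) (i : n) :
    ‖M.toEuclideanLin (hH.eigenvectorBasis i)‖ = √(hH.eigenvalues i) := by
  rw [hH.eigenvalues_eq i, ← Real.sqrt_sq (norm_nonneg _), @norm_sq_eq_re_inner 𝕜,
    ← LinearMap.adjoint_inner_right, ← toEuclideanLin_conjTranspose_eq_adjoint,
    EuclideanSpace.inner_eq_star_dotProduct, dotProduct_comm]
  simp only [toLpLin_apply, mulVec_mulVec]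

lemma Matrix.PosSemidef.trace_sqrt {𝕜 : Type*} [RCLike 𝕜] {A : Matrix n n 𝕜}
    (hA : A.PosSemidef) : hA.sqrt.trace = ∑ i, (√(hA.1.eigenvalues i) : 𝕜) := by
  rw [PosSemidef.sqrt, trace_mul_cycle, Unitary.coe_star_mul_self, one_mul, trace_diagonal]
  rfl

lemma re_trace_le_traceNorm (M : Matrix n n ℂ) : M.trace.re ≤ traceNorm M := by
  set hH := (posSemidef_conjTranspose_mul_self M).1
  set b := hH.eigenvectorBasis
  rw [traceNorm, PosSemidef.trace_sqrt, M.trace_eq_sum_inner b, Complex.re_sum, Complex.re_sum]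
  simp only [← RCLike.re_to_complex, RCLike.ofReal_re]
  gcongr with i
  calc (⟪b i, M.toEuclideanLin (b i)⟫_ℂ).re ≤ ‖b i‖ * ‖M.toEuclideanLin (b i)‖ :=
        re_inner_le_norm (𝕜 := ℂ) _ _
    _ = √(hH.eigenvalues i) := by
      rw [b.orthonormal.1 i, one_mul, norm_toEuclideanLin_eigenvectorBasis]

lemma Matrix.PosSemidef.sqrt_eq_cfcSqrt {A : Matrix n n ℂ} (hA : A.PosSemidef) :
    hA.sqrt = CFC.sqrt A := by
  rw [CFC.sqrt_eq_real_sqrt A hA.nonneg, cfcₙ_eq_cfc (hf0 := Real.sqrt_zero), hA.1.cfc_eq,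
    IsHermitian.cfc, Unitary.conjStarAlgAut_apply]
  rfl

lemma fidelity_eq_sq_traceNorm {A B : Matrix n n ℂ} (hA : A.PosSemidef) (hB : B.PosSemidef) :
    fidelity A B = traceNorm (CFC.sqrt A * CFC.sqrt B) ^ 2 := by
  rw [fidelity, dif_pos ⟨hA, hB⟩, hA.sqrt_eq_cfcSqrt, hB.sqrt_eq_cfcSqrt]

lemma Matrix.trace_mul_nonneg {A B : Matrix n n ℂ} (hA : 0 ≤ A) (hB : 0 ≤ B) :
    0 ≤ (A * B).trace := by
  have hconj : 0 ≤ CFC.sqrt A * B * CFC.sqrt A :=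
    (CFC.sqrt_nonneg A).isSelfAdjoint.conjugate_nonneg hB
  calc 0 ≤ (CFC.sqrt A * B * CFC.sqrt A).trace := (nonneg_iff_posSemidef.mp hconj).trace_nonneg
    _ = (A * B).trace := by rw [trace_mul_cycle, CFC.sqrt_mul_sqrt_self A hA]

lemma re_trace_le_mul_re_trace_sqrt_mul_sqrt {A B : Matrix n n ℂ} (hA : 0 ≤ A) (hB : 0 ≤ B)
    {c : ℝ} (hc : 0 ≤ c) (hAB : A ≤ c ^ 2 • B) :
    A.trace.re ≤ c * (CFC.sqrt A * CFC.sqrt B).trace.re := by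
  have hsqrt : CFC.sqrt (c ^ 2 • B) = c • CFC.sqrt B := by
    rw [CFC.sqrt_eq_iff _ _ (smul_nonneg (sq_nonneg c) hB) (smul_nonneg hc (CFC.sqrt_nonneg B)),
      smul_mul_smul, CFC.sqrt_mul_sqrt_self B, sq]
  have hle : CFC.sqrt A ≤ c • CFC.sqrt B := hsqrt ▸ CFC.sqrt_le_sqrt _ _ hAB
  have key := trace_mul_nonneg (CFC.sqrt_nonneg A) (sub_nonneg.mpr hle)
  rw [mul_sub, trace_sub, mul_smul_comm, trace_smul, CFC.sqrt_mul_sqrt_self A] at key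
  simpa using (Complex.nonneg_iff.mp key).1

lemma sq_re_trace_le_mul_fidelity {ω τ : Matrix n n ℂ} (hω : ω.PosSemidef) (hτ : τ.PosSemidef)
    {s : ℝ} (hs : 0 ≤ s) (h : ((s : ℂ) • τ - ω).PosSemidef) :
    ω.trace.re ^ 2 ≤ s * fidelity ω τ := by
  have hle : ω ≤ √s ^ 2 • τ := by
    rwa [Real.sq_sqrt hs, ← Complex.coe_smul]
  have htr : ω.trace.re ≤ √s * traceNorm (CFC.sqrt ω * CFC.sqrt τ) :=
    (re_trace_le_mul_re_trace_sqrt_mul_sqrt hω.nonneg hτ.nonneg (Real.sqrt_nonneg s) hle).trans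
      (mul_le_mul_of_nonneg_left (re_trace_le_traceNorm _) (Real.sqrt_nonneg s))
  rw [fidelity_eq_sq_traceNorm hω hτ, ← Real.sq_sqrt hs, ← mul_pow]
  exact pow_le_pow_left₀ (Complex.nonneg_iff.mp hω.trace_nonneg).1 htr 2

end

theorem dmin_le_dmax_general {n : Type*} [Fintype n] [DecidableEq n]
    (ω τ : Matrix n n ℂ) (hω : ω.PosSemidef) (hω1 : ω.trace = 1)
    (hτ : τ.PosSemidef) :
    ((Dmin ω τ : ℝ) : EReal) ≤ Dmax ω τ := by
  refine le_iInf₂ fun l hl => EReal.coe_le_coe_iff.mpr ?_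
  have hF : 1 ≤ 2 ^ l * fidelity ω τ := by
    simpa [hω1] using sq_re_trace_le_mul_fidelity hω hτ (by positivity) hl
  have hFpos : 0 < fidelity ω τ := pos_of_mul_pos_right (one_pos.trans_le hF) (by positivity)
  have hlog := Real.logb_nonneg one_lt_two hF
  rw [Real.logb_mul (by positivity) hFpos.ne', Real.logb_rpow two_pos one_lt_two.ne'] at hlog
  rw [Dmin]
  linarith

/-- The max-relative entropy dominates the min-relative entropy. -/
theorem dmin_le_dmax {n : Type*} [Fintype n] [DecidableEq n]
    (ω τ : Matrix n n ℂ) (hω : ω.PosSemidef) (hω1 : ω.trace = 1)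
    (hτ : τ.PosSemidef) (hτ1 : τ.trace = 1) :
    ((Dmin ω τ : ℝ) : EReal) ≤ Dmax ω τ :=
  dmin_le_dmax_general ω τ hω hω1 hτ
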